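/- The tree T_N on N(N−1) vertices (root a₀ with children a₁,…,a_{N−1}; each a_i for 2 ≤ i ≤ N−1 has one child b_i; each b_i has N−1 leaf children) admits a harmonious coloring using 2N − 2 colors, for N ≥ 3. -/
import Mathlib


/-- A coloring `c` is harmonious for `G` if it is a proper vertex coloring and
every unordered pair of colors appears on the endpoints of at most one edge. -/
def IsHarmonious {V α : Type*} (G : SimpleGraph V) (c : V → α) : Prop :=
  (∀ ⦃u v : V⦄, G.Adj u v → c u ≠ c v) ∧
  ∀ e ∈ G.edgeSet, ∀ e' ∈ G.edgeSet, Sym2.map c e = Sym2.map c e' → e = e'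

/-- The harmonious chromatic number: the least `k` such that `G` admits a
harmonious coloring with `k` colors. -/
noncomputable def harmoniousChromaticNumber {V : Type*} [Fintype V] (G : SimpleGraph V) : ℕ :=
  sInf {k | ∃ c : V → Fin k, IsHarmonious G c}


/-- The tree `T_N` on `N(N-1)` vertices: a root `a₀` with children
`a₁, …, a_{N-1}` (the summand `Fin N`, where index `0` is the root); each `a_i`
for `2 ≤ i ≤ N-1` has one child `b_i` (the summand `Fin (N-2)`, shifted by 2);
and each `b_i` has `N-1` leaf children (the summand `Fin (N-2) × Fin (N-1)`). -/
def treeT (N : ℕ) : SimpleGraph (Fin N ⊕ (Fin (N - 2) ⊕ Fin (N - 2) × Fin (N - 1))) :=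
  SimpleGraph.fromRel (fun x y =>
    match x, y with
    | .inl i, .inl j => i.val = 0 ∧ j.val ≠ 0
    | .inl i, .inr (.inl b) => i.val = b.val + 2
    | .inr (.inl b), .inr (.inr p) => b = p.1
    | _, _ => False)

/-- The harmonious coloring (as a `ℕ`-valued function): vertex `a_i` gets color
`i`, vertex `b_i` (index `b = i - 2`) gets color `N + b`, and the `j`-th leaf
child of `b_i` gets the `j`-th color in `{0, …, N-1} \ {b+2}`. -/
def tcol (N : ℕ) : (Fin N ⊕ (Fin (N - 2) ⊕ Fin (N - 2) × Fin (N - 1))) → ℕ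
  | .inl i => i.val
  | .inr (.inl b) => N + b.val
  | .inr (.inr (b, j)) => if j.val < b.val + 2 then j.val else j.val + 1

lemma tcol_lt {N : ℕ} (hN : 3 ≤ N) (x : Fin N ⊕ (Fin (N - 2) ⊕ Fin (N - 2) × Fin (N - 1))) :
    tcol N x < 2 * N - 2 := by
  rcases x with i | b | ⟨b, j⟩
  · have := i.isLt; simp only [tcol]; omega
  · have := b.isLt; simp only [tcol]; omega
  · have := b.isLt; have := j.isLt; simp only [tcol]; split <;> omega

/-- Every edge of `treeT N` has one of three canonical forms. -/
lemma treeT_edge_form {N : ℕ} (hN : 3 ≤ N)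
    {u v : Fin N ⊕ (Fin (N - 2) ⊕ Fin (N - 2) × Fin (N - 1))} (h : (treeT N).Adj u v) :
    (∃ j : Fin N, 0 < j.val ∧ s(u, v) = s(Sum.inl ⟨0, by omega⟩, Sum.inl j)) ∨
    (∃ b : Fin (N - 2), s(u, v) = s(Sum.inl ⟨b.val + 2, by have := b.isLt; omega⟩, Sum.inr (Sum.inl b))) ∨
    (∃ (b : Fin (N - 2)) (j : Fin (N - 1)), s(u, v) = s(Sum.inr (Sum.inl b), Sum.inr (Sum.inr (b, j)))) := by
  rw [treeT, SimpleGraph.fromRel_adj] at h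
  obtain ⟨hne, h | h⟩ := h <;>
    rcases u with i | b | ⟨b, j⟩ <;> rcases v with i' | b' | ⟨b', j'⟩ <;>
    first
    | exact h.elim
    | (obtain ⟨h1, h2⟩ := h; left;
       exact ⟨i', by omega, by rw [show i = (⟨0, by omega⟩ : Fin N) from Fin.ext h1]⟩)
    | (obtain ⟨h1, h2⟩ := h; left;
       refine ⟨i, by omega, ?_⟩;
       rw [show i' = (⟨0, by omega⟩ : Fin N) from Fin.ext h1, Sym2.eq_swap])
    | (right; left;
       exact ⟨b', by rw [show i = (⟨b'.val + 2, by have := b'.isLt; omega⟩ : Fin N) from Fin.ext h]⟩)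
    | (right; left;
       refine ⟨b, ?_⟩;
       rw [show i' = (⟨b.val + 2, by have := b.isLt; omega⟩ : Fin N) from Fin.ext h, Sym2.eq_swap])
    | (right; right;
       refine ⟨b', j', ?_⟩; rw [show b = b' from h])
    | (right; right;
       refine ⟨b, j, ?_⟩; rw [show b' = b from h]; exact Sym2.eq_swap)

theorem treeT_has_harmonious_coloring (N : ℕ) (hN : 3 ≤ N) :
    ∃ c : (Fin N ⊕ (Fin (N - 2) ⊕ Fin (N - 2) × Fin (N - 1))) → Fin (2 * N - 2),
      IsHarmonious (treeT N) c := by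
  refine ⟨fun x => ⟨tcol N x, tcol_lt hN x⟩, ?_, ?_⟩
  · -- proper coloring
    intro u v h hc
    have hval : tcol N u = tcol N v := congrArg Fin.val hc
    rcases treeT_edge_form hN h with ⟨j, hj, he⟩ | ⟨b, he⟩ | ⟨b, j, he⟩ <;>
      rw [Sym2.eq_iff] at he <;>
      rcases he with ⟨rfl, rfl⟩ | ⟨rfl, rfl⟩ <;>
      simp only [tcol] at hval
    · omega
    · omega
    · have := b.isLt; omega
    · have := b.isLt; omega
    · have := b.isLt; have := j.isLt; split_ifs at hval <;> omega
    · have := b.isLt; have := j.isLt; split_ifs at hval <;> omega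
  · -- color pairs determine edges
    intro e he e' he' hmap
    induction e using Sym2.ind with | _ u v => ?_
    induction e' using Sym2.ind with | _ u' v' => ?_
    rw [SimpleGraph.mem_edgeSet] at he he'
    rcases treeT_edge_form hN he with ⟨j, hj, he⟩ | ⟨b, he⟩ | ⟨b, j, he⟩ <;>
      rcases treeT_edge_form hN he' with ⟨j2, hj2, he'⟩ | ⟨b2, he'⟩ | ⟨b2, j2, he'⟩ <;>
      rw [he, he'] at hmap ⊢ <;>
      simp only [Sym2.map_pair_eq, Sym2.eq_iff, Fin.mk.injEq, tcol] at hmap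
    · rw [show j = j2 from Fin.ext (by omega)]
    · exfalso; have := b2.isLt; have := j.isLt
      rcases hmap with ⟨h1, h2⟩ | ⟨h1, h2⟩ <;> omega
    · exfalso; have := b2.isLt; have := j.isLt; have := j2.isLt
      rcases hmap with ⟨h1, h2⟩ | ⟨h1, h2⟩ <;> split_ifs at h1 h2 <;> omega
    · exfalso; have := b.isLt; have := j2.isLt
      rcases hmap with ⟨h1, h2⟩ | ⟨h1, h2⟩ <;> omega
    · rw [show b = b2 from Fin.ext (by have := b.isLt; have := b2.isLt; omega)]
    · exfalso; have := b.isLt; have := b2.isLt; have := j2.isLt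
      rcases hmap with ⟨h1, h2⟩ | ⟨h1, h2⟩ <;> split_ifs at h1 h2 <;> omega
    · exfalso; have := b.isLt; have := j.isLt; have := j2.isLt
      rcases hmap with ⟨h1, h2⟩ | ⟨h1, h2⟩ <;> split_ifs at h1 h2 <;> omega
    · exfalso; have := b.isLt; have := b2.isLt; have := j.isLt
      rcases hmap with ⟨h1, h2⟩ | ⟨h1, h2⟩ <;> split_ifs at h1 h2 <;> omega
    · have hb : b = b2 := by
        refine Fin.ext ?_
        have := j.isLt; have := j2.isLt
        rcases hmap with ⟨h1, h2⟩ | ⟨h1, h2⟩ <;> split_ifs at h1 h2 <;> omega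
      subst hb
      have hj' : j = j2 := by
        refine Fin.ext ?_
        have := b.isLt; have := j.isLt; have := j2.isLt
        rcases hmap with ⟨h1, h2⟩ | ⟨h1, h2⟩ <;> split_ifs at h1 h2 <;> omega
      rw [hj']
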